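/- arXiv:2605.30004 — 7 statements merged into one kernel-verified Lean document; each statement's English description precedes it below -/
import Mathlib

section
/- Let F(x) = x·ln x for x > 0 and fix a > 0. The function H_a^0(x) := ∫_a^x H_a^1(t) dt, where H_a^1(t) = (F(t) − F(a))/(t − a) for t ≠ a and H_a^1(a) = ln a + 1, is convex on the interval (0, ∞). -/
/-- `H_a^1` : the secant slope of `F x = x * log x` at `a`, extended continuously at `x = a`. -/
noncomputable def Hone (a t : ℝ) : ℝ :=
  if t = a then Real.log a + 1 else (t * Real.log t - a * Real.log a) / (t - a)

/-- `H_a^0(x) = ∫_a^x H_a^1(t) dt`. -/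
noncomputable def Hzero (a x : ℝ) : ℝ := ∫ t in a..x, Hone a t

/-!
`H_a^1` is the `dslope` of the convex function `F x = x log x` at `a`. For a convex function
differentiable at `a`, the slope of the chord from `a` is nondecreasing, and the derivative at `a`
sits between the left and right slopes, so `H_a^1` is monotone on `(0, ∞)`; it is also continuous
there. Hence `H_a^0`, a primitive of `H_a^1`, has a monotone derivative and is convex.
-/

open Real Set

theorem ConvexOn.monotoneOn_dslope {s : Set ℝ} {f : ℝ → ℝ} {a : ℝ} (hf : ConvexOn ℝ s f)
    (ha : a ∈ s) (hfa : DifferentiableAt ℝ f a) : MonotoneOn (dslope f a) s := by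
  intro x hx y hy hxy
  obtain rfl | hxa := eq_or_ne x a
  · obtain rfl | hyx := eq_or_ne y x
    · exact le_rfl
    · rw [dslope_same, dslope_of_ne _ hyx]
      exact hf.deriv_le_slope hx hy (hxy.lt_of_ne' hyx) hfa
  · obtain rfl | hya := eq_or_ne y a
    · rw [dslope_same, dslope_of_ne _ hxa, slope_comm]
      exact hf.slope_le_deriv hx hy (hxy.lt_of_ne hxa) hfa
    · rw [dslope_of_ne _ hxa, dslope_of_ne _ hya]
      exact hf.slope_mono ha ⟨hx, hxa⟩ ⟨hy, hya⟩ hxy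

section Primitive

variable {s : Set ℝ} {g : ℝ → ℝ} {a : ℝ}

theorem hasDerivAt_integral_of_continuousOn (hs : IsOpen s) (hsc : s.OrdConnected)
    (hg : ContinuousOn g s) (ha : a ∈ s) {x : ℝ} (hx : x ∈ s) :
    HasDerivAt (fun x => ∫ t in a..x, g t) (g x) x :=
  intervalIntegral.integral_hasDerivAt_right (hg.mono (hsc.uIcc_subset ha hx)).intervalIntegrable
    (hg.stronglyMeasurableAtFilter hs x hx) (hg.continuousAt (hs.mem_nhds hx))

theorem convexOn_integral_of_monotoneOn (hs : IsOpen s) (hsc : Convex ℝ s) (ha : a ∈ s)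
    (hg : ContinuousOn g s) (hmono : MonotoneOn g s) :
    ConvexOn ℝ s (fun x => ∫ t in a..x, g t) := by
  have hderiv := fun x (hx : x ∈ s) =>
    hasDerivAt_integral_of_continuousOn hs hsc.ordConnected hg ha hx
  refine MonotoneOn.convexOn_of_deriv hsc
    (fun x hx => (hderiv x hx).continuousAt.continuousWithinAt) ?_ ?_ <;> rw [hs.interior_eq]
  · exact fun x hx => (hderiv x hx).differentiableAt.differentiableWithinAt
  · intro x hx y hy hxy
    rw [(hderiv x hx).deriv, (hderiv y hy).deriv]
    exact hmono hx hy hxy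

end Primitive

theorem hone_eq_dslope {a : ℝ} (ha : a ≠ 0) : Hone a = dslope (fun x => x * log x) a := by
  ext t
  obtain rfl | hta := eq_or_ne t a
  · rw [Hone, if_pos rfl, dslope_same, (hasDerivAt_mul_log ha).deriv]
  · rw [Hone, if_neg hta, dslope_of_ne _ hta, slope_def_field]

/-- For fixed `a > 0`, the function `H_a^0` is convex on `(0, ∞)`. -/
theorem stmt1 (a : ℝ) (ha : 0 < a) :
    ConvexOn ℝ (Set.Ioi (0 : ℝ)) (fun x => Hzero a x) := by
  have hF : DifferentiableAt ℝ (fun x => x * log x) a :=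
    (hasDerivAt_mul_log ha.ne').differentiableAt
  have hcont : ContinuousOn (Hone a) (Ioi 0) := by
    rw [hone_eq_dslope ha.ne', continuousOn_dslope (Ioi_mem_nhds ha)]
    exact ⟨continuous_mul_log.continuousOn, hF⟩
  have hmono : MonotoneOn (Hone a) (Ioi 0) := by
    rw [hone_eq_dslope ha.ne']
    exact (convexOn_mul_log.subset Ioi_subset_Ici_self (convex_Ioi 0)).monotoneOn_dslope ha hF
  exact convexOn_integral_of_monotoneOn isOpen_Ioi (convex_Ioi 0) ha hcont hmono
end

section
/- Let σ_w, σ_n > 0 and define G(x) = σ_w·ln x − σ_n·ln(1 − x) for x ∈ (0,1). Then for all x, y ∈ (0,1), (G(x) − G(y))·(x − y) ≥ (√σ_w + √σ_n)^2·(x − y)^2. -/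
/-- For `σ_w, σ_n > 0` and `G x = σ_w log x - σ_n log (1 - x)` on `(0,1)`:
for all `x, y ∈ (0,1)`, `(G x - G y)(x - y) ≥ (√σ_w + √σ_n)^2 (x - y)^2`. -/
theorem stmt7 (σw σn : ℝ) (hσw : 0 < σw) (hσn : 0 < σn) :
    ∀ x ∈ Set.Ioo (0 : ℝ) 1, ∀ y ∈ Set.Ioo (0 : ℝ) 1,
      (Real.sqrt σw + Real.sqrt σn) ^ 2 * (x - y) ^ 2 ≤
        ((σw * Real.log x - σn * Real.log (1 - x)) -
         (σw * Real.log y - σn * Real.log (1 - y))) * (x - y) := by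
  set c : ℝ := (Real.sqrt σw + Real.sqrt σn) ^ 2 with hc
  set H : ℝ → ℝ := fun t => σw * Real.log t - σn * Real.log (1 - t) - c * t with hH
  have hd : ∀ t ∈ Set.Ioo (0 : ℝ) 1,
      HasDerivAt H (σw * t⁻¹ - σn * ((1 - t)⁻¹ * (-1)) - c * 1) t := by
    intro t ht
    have h1 : HasDerivAt (fun t : ℝ => σw * Real.log t) (σw * t⁻¹) t :=
      (Real.hasDerivAt_log ht.1.ne').const_mul σw
    have h2 : HasDerivAt (fun t : ℝ => (1 : ℝ) - t) (-1) t :=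
      (hasDerivAt_id t).const_sub 1
    have h1t : (1 : ℝ) - t ≠ 0 := by have := ht.2; intro h; linarith
    have h3 : HasDerivAt (fun t : ℝ => Real.log (1 - t)) ((1 - t)⁻¹ * (-1)) t :=
      (Real.hasDerivAt_log h1t).comp t h2
    exact ((h1.sub (h3.const_mul σn)).sub ((hasDerivAt_id t).const_mul c))
  have hderiv_nonneg : ∀ t ∈ Set.Ioo (0 : ℝ) 1,
      0 ≤ σw * t⁻¹ - σn * ((1 - t)⁻¹ * (-1)) - c * 1 := by
    intro t ht
    have ht0 : 0 < t := ht.1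
    have ht1 : 0 < 1 - t := by linarith [ht.2]
    have key : c * (t * (1 - t)) ≤ σw * (1 - t) + σn * t := by
      have hs : Real.sqrt σw ^ 2 = σw := Real.sq_sqrt hσw.le
      have hn : Real.sqrt σn ^ 2 = σn := Real.sq_sqrt hσn.le
      nlinarith [sq_nonneg (Real.sqrt σw * (1 - t) - Real.sqrt σn * t),
        mul_pos ht0 ht1]
    have h1 : σw * t⁻¹ = σw / t := by ring
    have h2 : σn * ((1 - t)⁻¹ * (-1)) = -(σn / (1 - t)) := by ring
    rw [h1, h2]
    have h4 : c ≤ σw / t + σn / (1 - t) := by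
      rw [div_add_div _ _ ht0.ne' ht1.ne', le_div_iff₀ (mul_pos ht0 ht1)]
      linarith
    linarith
  have hmono : MonotoneOn H (Set.Ioo (0 : ℝ) 1) := by
    have hconv : Convex ℝ (Set.Ioo (0 : ℝ) 1) := convex_Ioo 0 1
    have hdiff : DifferentiableOn ℝ H (Set.Ioo (0 : ℝ) 1) :=
      fun t ht => (hd t ht).differentiableAt.differentiableWithinAt
    refine monotoneOn_of_deriv_nonneg hconv hdiff.continuousOn ?_ ?_
    · rw [interior_Ioo]; exact hdiff
    · intro t ht
      rw [interior_Ioo] at ht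
      rw [(hd t ht).deriv]
      exact hderiv_nonneg t ht
  intro x hx y hy
  rcases le_total x y with h | h
  · have := hmono hx hy h
    simp only [hH] at this
    nlinarith [this]
  · have := hmono hy hx h
    simp only [hH] at this
    nlinarith [this]
end

section
/- Let σ_w, σ_n, σ_wn > 0 and define the free-energy density F(s) = σ_w·s·(ln s − 1) + σ_n·(1 − s)·(ln(1 − s) − 1) + σ_wn·s·(1 − s) for s ∈ (0,1). Then for all s, s' ∈ (0,1): F(s') − F(s) ≤ (σ_w·ln s' + σ_wn·(1 − s))·(s' − s) + (σ_n·ln(1 − s') + σ_wn·s)·((1 − s') − (1 − s)). -/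
/-- Convex-splitting inequality for the free-energy density
`F s = σ_w s (log s - 1) + σ_n (1-s)(log(1-s) - 1) + σ_wn s (1-s)`:
for all `s, s' ∈ (0,1)`,
`F s' - F s ≤ (σ_w log s' + σ_wn (1-s))(s' - s) + (σ_n log(1-s') + σ_wn s)((1-s') - (1-s))`. -/
theorem stmt9 (σw σn σwn : ℝ) (hσw : 0 < σw) (hσn : 0 < σn) (hσwn : 0 < σwn)
    (F : ℝ → ℝ)
    (hF : ∀ s, F s = σw * s * (Real.log s - 1) + σn * (1 - s) * (Real.log (1 - s) - 1)
      + σwn * s * (1 - s)) :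
    ∀ s ∈ Set.Ioo (0 : ℝ) 1, ∀ s' ∈ Set.Ioo (0 : ℝ) 1,
      F s' - F s ≤ (σw * Real.log s' + σwn * (1 - s)) * (s' - s) +
        (σn * Real.log (1 - s') + σwn * s) * ((1 - s') - (1 - s)) := by
  rintro s ⟨hs0, hs1⟩ s' ⟨hs0', hs1'⟩
  have h1s : (0:ℝ) < 1 - s := by linarith
  have h1s' : (0:ℝ) < 1 - s' := by linarith
  have h1 : s * (Real.log s' - Real.log s) ≤ s' - s := by
    have := Real.log_le_sub_one_of_pos (show 0 < s'/s by positivity)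
    rw [Real.log_div (ne_of_gt hs0') (ne_of_gt hs0)] at this
    have h2 := mul_le_mul_of_nonneg_left this hs0.le
    rw [mul_sub] at h2
    have : s * (s'/s) = s' := by field_simp
    nlinarith
  have h2 : (1-s) * (Real.log (1-s') - Real.log (1-s)) ≤ (1-s') - (1-s) := by
    have := Real.log_le_sub_one_of_pos (show 0 < (1-s')/(1-s) by positivity)
    rw [Real.log_div (ne_of_gt h1s') (ne_of_gt h1s)] at this
    have h2 := mul_le_mul_of_nonneg_left this h1s.le
    rw [mul_sub] at h2
    have : (1-s) * ((1-s')/(1-s)) = 1-s' := by field_simp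
    nlinarith
  rw [hF, hF]
  nlinarith [mul_le_mul_of_nonneg_left h1 hσw.le,
    mul_le_mul_of_nonneg_left h2 hσn.le,
    mul_nonneg hσwn.le (sq_nonneg (s' - s))]
end

section
/- Let σ_w, σ_n, σ_wn > 0, τ ≥ 0, and let s, s' ∈ (0,1) with s' ≠ s. Define H(x, y) = (x·ln x − y·ln y)/(x − y) for x ≠ y, and set μ_w = σ_w·(H(s', s) − 1) + σ_wn·(1 − (s + s')/2) + τ·(ln s' − ln s) and μ_n = σ_n·(H(1 − s', 1 − s) − 1) + σ_wn·(s + s')/2 + τ·(ln(1 − s') − ln(1 − s)). Then, with F(s) = σ_w·s·(ln s − 1) + σ_n·(1 − s)·(ln(1 − s) − 1) + σ_wn·s·(1 − s): F(s') − F(s) ≤ μ_w·(s' − s) + μ_n·((1 − s') − (1 − s)). -/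
/-
The secant quotient makes the entropy parts exact: `σ (H(s', s) - 1) (s' - s)` is precisely the
increment of `σ s (log s - 1)`, and the midpoint value of the derivative of the quadratic term gives
its increment exactly too. So the gap between the two sides of the inequality is the stabilization
`τ ((s' - s)(log s' - log s) + ((1 - s') - (1 - s))(log (1 - s') - log (1 - s)))`, which is
nonnegative because `log` is increasing.
-/

/-- The secant-slope quotient of `x ↦ x log x`. -/
noncomputable def Hsec (x y : ℝ) : ℝ := (x * Real.log x - y * Real.log y) / (x - y)

open Real

theorem Hsec_mul_sub (x y : ℝ) : Hsec x y * (x - y) = x * log x - y * log y := by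
  rcases eq_or_ne x y with rfl | hxy
  · simp
  · exact div_mul_cancel₀ _ (sub_ne_zero.mpr hxy)

theorem sub_mul_log_sub_log_nonneg {x y : ℝ} (hx : 0 < x) (hy : 0 < y) :
    0 ≤ (x - y) * (log x - log y) := by
  rw [mul_comm]
  exact (monovaryOn_id_iff.2 strictMonoOn_log.monotoneOn).sub_mul_sub_nonneg
    (Set.mem_Ioi.2 hy) (Set.mem_Ioi.2 hx)

theorem stmt10_general (σw σn σwn τ : ℝ)
    (hτ : 0 ≤ τ) (s s' : ℝ) (hs : s ∈ Set.Ioo (0 : ℝ) 1) (hs' : s' ∈ Set.Ioo (0 : ℝ) 1)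
    (μw μn : ℝ)
    (hμw : μw = σw * (Hsec s' s - 1) + σwn * (1 - (s + s') / 2)
      + τ * (Real.log s' - Real.log s))
    (hμn : μn = σn * (Hsec (1 - s') (1 - s) - 1) + σwn * ((s + s') / 2)
      + τ * (Real.log (1 - s') - Real.log (1 - s)))
    (F : ℝ → ℝ)
    (hF : ∀ x, F x = σw * x * (Real.log x - 1) + σn * (1 - x) * (Real.log (1 - x) - 1)
      + σwn * x * (1 - x)) :
    F s' - F s ≤ μw * (s' - s) + μn * ((1 - s') - (1 - s)) := by
  obtain ⟨hs0, hs1⟩ := hs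
  obtain ⟨hs'0, hs'1⟩ := hs'
  have hw := mul_nonneg hτ (sub_mul_log_sub_log_nonneg hs'0 hs0)
  have hn := mul_nonneg hτ (sub_mul_log_sub_log_nonneg (sub_pos.2 hs'1) (sub_pos.2 hs1))
  rw [hμw, hμn, hF, hF]
  linear_combination -σw * Hsec_mul_sub s' s - σn * Hsec_mul_sub (1 - s') (1 - s) + hw + hn

/-- Energy inequality for the second-order (secant/stabilized) chemical potentials:
for `σ_w, σ_n, σ_wn > 0`, `τ ≥ 0`, `s, s' ∈ (0,1)` with `s' ≠ s`, setting
`μ_w = σ_w (H(s',s) - 1) + σ_wn (1 - (s+s')/2) + τ (log s' - log s)` and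
`μ_n = σ_n (H(1-s',1-s) - 1) + σ_wn (s+s')/2 + τ (log(1-s') - log(1-s))`, one has
`F s' - F s ≤ μ_w (s' - s) + μ_n ((1-s') - (1-s))` where
`F s = σ_w s (log s - 1) + σ_n (1-s)(log(1-s) - 1) + σ_wn s(1-s)`. -/
theorem stmt10 (σw σn σwn τ : ℝ) (hσw : 0 < σw) (hσn : 0 < σn) (hσwn : 0 < σwn)
    (hτ : 0 ≤ τ) (s s' : ℝ) (hs : s ∈ Set.Ioo (0 : ℝ) 1) (hs' : s' ∈ Set.Ioo (0 : ℝ) 1)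
    (hne : s' ≠ s)
    (μw μn : ℝ)
    (hμw : μw = σw * (Hsec s' s - 1) + σwn * (1 - (s + s') / 2)
      + τ * (Real.log s' - Real.log s))
    (hμn : μn = σn * (Hsec (1 - s') (1 - s) - 1) + σwn * ((s + s') / 2)
      + τ * (Real.log (1 - s') - Real.log (1 - s)))
    (F : ℝ → ℝ)
    (hF : ∀ x, F x = σw * x * (Real.log x - 1) + σn * (1 - x) * (Real.log (1 - x) - 1)
      + σwn * x * (1 - x)) :
    F s' - F s ≤ μw * (s' - s) + μn * ((1 - s') - (1 - s)) :=
  stmt10_general σw σn σwn τ hτ s s' hs hs' μw μn hμw hμn F hF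
end

section
/- Let N ≥ 1, let σ_w, σ_n, σ_wn > 0, let c ∈ ℝ^N, let Q be a symmetric positive-semidefinite real N×N matrix, and let S⁰ ∈ ℝ^N satisfy 0 < S⁰_i < 1 for all i; set β = Σ_i S⁰_i. Let Φ : [0,1] → ℝ be Φ(x) = x·ln x for x > 0 and Φ(0) = 0. Define J(S) = (1/2)·(S − S⁰)ᵀ Q (S − S⁰) + Σ_i [ σ_w·(Φ(S_i) − S_i) + σ_n·(Φ(1 − S_i) − (1 − S_i)) + σ_wn·c_i·S_i ] on the compact convex set K = { S ∈ ℝ^N : 0 ≤ S_i ≤ 1 for all i, and Σ_i S_i = β }. Then J attains its minimum over K at a unique point S*, and this minimizer satisfies 0 < S*_i < 1 for every i. -/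
/-!
The energy is a convex quadratic plus a sum of one-variable terms `g k`, each of which is
`σw x log x` plus a convex function and also `σn (1 - x) log (1 - x)` plus a convex function.
The first decomposition makes the energy strictly convex on the capped simplex, which is compact
and convex, so the minimizer exists and is unique. If the minimizer had a coordinate `S i = 0`,
moving a fraction `λ` of the mass of a positive coordinate `S j` onto site `i` would change the
energy by at most `λ C + σw S j λ log λ` (convexity of everything except the singular term),
which is negative for small `λ` since `x log x` has infinite slope at `0`. The face `S i = 1`
is handled by the same argument applied to `1 - S`.
-/

open Real Set Matrix

theorem ConvexOn.comp_const_sub {𝕜 E β : Type*} [Field 𝕜] [LinearOrder 𝕜] [IsStrictOrderedRing 𝕜]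
    [AddCommGroup E] [Module 𝕜 E] [AddCommMonoid β] [PartialOrder β] [SMul 𝕜 β]
    {s : Set E} {f : E → β} (hf : ConvexOn 𝕜 s f) (c : E) :
    ConvexOn 𝕜 ((fun x => c - x) ⁻¹' s) fun x => f (c - x) :=
  hf.comp_affineMap (AffineMap.const 𝕜 E c - AffineMap.id 𝕜 E)

theorem StrictConvexOn.const_mul {E : Type*} [AddCommMonoid E] [Module ℝ E] {s : Set E}
    {f : E → ℝ} (hf : StrictConvexOn ℝ s f) {c : ℝ} (hc : 0 < c) :
    StrictConvexOn ℝ s fun x => c * f x :=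
  ⟨hf.1, fun x hx y hy hxy a b ha hb hab => by
    have := mul_lt_mul_of_pos_left (hf.2 hx hy hxy ha hb hab) hc
    simp only [smul_eq_mul] at this ⊢
    linarith⟩

theorem strictConvexOn_sum_apply {ι E : Type*} [Fintype ι] [AddCommMonoid E] [Module ℝ E]
    {t : ι → Set E} {g : ι → E → ℝ} (hg : ∀ k, StrictConvexOn ℝ (t k) (g k)) :
    StrictConvexOn ℝ (univ.pi t) fun S => ∑ k, g k (S k) := by
  refine ⟨convex_pi fun k _ => (hg k).1, fun S hS T hT hST a b ha hb hab => ?_⟩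
  obtain ⟨i, hi⟩ := Function.ne_iff.1 hST
  simp only [Pi.add_apply, Pi.smul_apply, smul_eq_mul, Finset.mul_sum, ← Finset.sum_add_distrib]
  refine Finset.sum_lt_sum (fun k _ => (hg k).convexOn.2 (hS k trivial) (hT k trivial)
    ha.le hb.le hab) ⟨i, Finset.mem_univ i, (hg i).2 (hS i trivial) (hT i trivial) hi ha hb hab⟩

theorem Matrix.PosSemidef.convexOn_dotProduct_mulVec_sub {ι : Type*} [Fintype ι]
    {Q : Matrix ι ι ℝ} (hQ : Q.PosSemidef) (x₀ : ι → ℝ) :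
    ConvexOn ℝ univ fun x => (x - x₀) ⬝ᵥ Q *ᵥ (x - x₀) := by
  refine ⟨convex_univ, fun x _ y _ a b ha hb hab => ?_⟩
  obtain rfl : b = 1 - a := by linarith
  have hxy := hQ.dotProduct_mulVec_nonneg ((x - x₀) - (y - x₀))
  have hcomb : a • x + (1 - a) • y - x₀ = a • (x - x₀) + (1 - a) • (y - x₀) := by module
  rw [star_trivial] at hxy
  simp only [hcomb, Matrix.mulVec_add, Matrix.mulVec_sub, Matrix.mulVec_smul, dotProduct_add,
    dotProduct_sub, add_dotProduct, sub_dotProduct, dotProduct_smul, smul_dotProduct,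
    smul_eq_mul] at hxy ⊢
  nlinarith [mul_nonneg (mul_nonneg ha hb) hxy]

theorem exists_mem_Ioo_mul_mul_log_add_mul_neg {κ : ℝ} (hκ : 0 < κ) (C : ℝ) :
    ∃ t ∈ Ioo (0 : ℝ) 1, κ * (t * log t) + C * t < 0 := by
  refine ⟨exp (-(|C| / κ) - 1), ⟨exp_pos _, exp_lt_one_iff.2 ?_⟩, ?_⟩
  · linarith [show 0 ≤ |C| / κ by positivity]
  have : κ * (-(|C| / κ) - 1) + C < 0 := by
    rw [mul_sub, mul_neg, mul_div_cancel₀ _ hκ.ne']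
    linarith [le_abs_self C]
  rw [log_exp]
  nlinarith [exp_pos (-(|C| / κ) - 1)]

theorem convexOn_mul_log_add_mul_log_one_sub {A B : ℝ} (hA : 0 ≤ A) (hB : 0 ≤ B) (a b : ℝ) :
    ConvexOn ℝ (Icc 0 1)
      fun x => A * (x * log x) + B * ((1 - x) * log (1 - x)) + (a * x + b) := by
  have hΦ : ConvexOn ℝ (Icc 0 1) fun x : ℝ => x * log x :=
    convexOn_mul_log.subset Icc_subset_Ici_self (convex_Icc 0 1)
  have hΦ' : ConvexOn ℝ (Icc 0 1) fun x : ℝ => (1 - x) * log (1 - x) := by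
    simpa [preimage_const_sub_Icc] using hΦ.comp_const_sub 1
  exact ((hΦ.smul hA).add (hΦ'.smul hB)).add
    ((LinearMap.convexOn (LinearMap.mulLeft ℝ a) (convex_Icc 0 1)).add_const b)

theorem strictConvexOn_of_convexOn_sub_mul_mul_log {g : ℝ → ℝ} {κ : ℝ} (hκ : 0 < κ)
    (hg : ConvexOn ℝ (Icc 0 1) fun x => g x - κ * (x * log x)) :
    StrictConvexOn ℝ (Icc 0 1) g := by
  have hΦ := (strictConvexOn_mul_log.subset Icc_subset_Ici_self (convex_Icc 0 1)).const_mul hκ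
  have hsplit : g = (fun x => g x - κ * (x * log x)) + fun x => κ * (x * log x) := by
    ext x
    rw [Pi.add_apply, sub_add_cancel]
  exact hsplit ▸ hg.add_strictConvexOn hΦ

theorem apply_mul_le_of_convexOn_sub_mul_mul_log {g : ℝ → ℝ} {κ y t : ℝ}
    (hg : ConvexOn ℝ (Icc 0 1) fun x => g x - κ * (x * log x)) (hy : y ∈ Ioc 0 1)
    (ht : t ∈ Ioo 0 1) :
    g (t * y) ≤ (1 - t) * g 0 + t * g y + κ * y * (t * log t) := by
  have h := hg.2 (left_mem_Icc.2 zero_le_one) (Ioc_subset_Icc_self hy)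
    (sub_nonneg.2 ht.2.le) ht.1.le (sub_add_cancel 1 t)
  simp only [smul_eq_mul, mul_zero, zero_add, zero_mul, sub_zero] at h
  rw [log_mul ht.1.ne' hy.1.ne'] at h
  linarith

section CappedSimplex

variable {ι : Type*} [Fintype ι]

def cappedSimplex (ι : Type*) [Fintype ι] (β : ℝ) : Set (ι → ℝ) :=
  {S | (∀ i, S i ∈ Icc (0 : ℝ) 1) ∧ ∑ i, S i = β}

theorem cappedSimplex_subset_pi (β : ℝ) :
    cappedSimplex ι β ⊆ univ.pi fun _ => Icc 0 1 :=
  fun _ hS i _ => hS.1 i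

theorem convex_cappedSimplex (β : ℝ) : Convex ℝ (cappedSimplex ι β) := by
  intro S hS T hT a b ha hb hab
  refine ⟨fun i => (convex_Icc 0 1) (hS.1 i) (hT.1 i) ha hb hab, ?_⟩
  simp only [Pi.add_apply, Pi.smul_apply, smul_eq_mul, Finset.sum_add_distrib, ← Finset.mul_sum,
    hS.2, hT.2]
  rw [← add_mul, hab, one_mul]

theorem isClosed_cappedSimplex (β : ℝ) : IsClosed (cappedSimplex ι β) := by
  simp only [cappedSimplex, ofPred_and, ofPred_forall]
  exact (isClosed_iInter fun i => isClosed_Icc.preimage (continuous_apply i)).inter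
    (isClosed_eq (continuous_finsetSum _ fun i _ => continuous_apply i) continuous_const)

theorem isCompact_cappedSimplex (β : ℝ) : IsCompact (cappedSimplex ι β) :=
  (isCompact_univ_pi fun _ => isCompact_Icc).of_isClosed_subset (isClosed_cappedSimplex β)
    (cappedSimplex_subset_pi β)

theorem strictConvexOn_cappedSimplex_add_sum {q : (ι → ℝ) → ℝ} {g : ι → ℝ → ℝ} {κ β : ℝ}
    (hκ : 0 < κ) (hq : ConvexOn ℝ (cappedSimplex ι β) q)
    (hg : ∀ k, ConvexOn ℝ (Icc 0 1) fun x => g k x - κ * (x * log x)) :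
    StrictConvexOn ℝ (cappedSimplex ι β) fun S => q S + ∑ k, g k (S k) :=
  hq.add_strictConvexOn <|
    (strictConvexOn_sum_apply fun k => strictConvexOn_of_convexOn_sub_mul_mul_log hκ (hg k))
      |>.subset (cappedSimplex_subset_pi β) (convex_cappedSimplex β)

theorem preimage_one_sub_cappedSimplex (β : ℝ) :
    (fun S => 1 - S) ⁻¹' cappedSimplex ι β = cappedSimplex ι (Fintype.card ι - β) := by
  ext S
  simp only [cappedSimplex, mem_preimage, mem_ofPred_eq, Pi.sub_apply, Pi.one_apply,
    Finset.sum_sub_distrib, Finset.sum_const, Finset.card_univ, nsmul_eq_mul, mul_one]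
  constructor <;> rintro ⟨hbox, hsum⟩ <;> refine ⟨fun i => ?_, by linarith⟩ <;>
    have := hbox i <;> simp only [mem_Icc] at this ⊢ <;> constructor <;> linarith

theorem pos_of_isMinOn_cappedSimplex {q : (ι → ℝ) → ℝ} {g : ι → ℝ → ℝ} {κ β : ℝ} (hκ : 0 < κ)
    (hq : ConvexOn ℝ (cappedSimplex ι β) q)
    (hg : ∀ k, ConvexOn ℝ (Icc 0 1) fun x => g k x - κ * (x * log x)) (hβ : 0 < β)
    {S : ι → ℝ} (hS : S ∈ cappedSimplex ι β)
    (hmin : IsMinOn (fun S => q S + ∑ k, g k (S k)) (cappedSimplex ι β) S) (i : ι) :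
    0 < S i := by
  classical
  by_contra! hi
  have hi0 : S i = 0 := le_antisymm hi (hS.1 i).1
  obtain ⟨j, -, hj⟩ : ∃ j ∈ Finset.univ, (0 : ℝ) < S j :=
    Finset.exists_lt_of_sum_lt (by simpa [hS.2] using hβ)
  set T := S ∘ Equiv.swap i j
  have hT : T ∈ cappedSimplex ι β :=
    ⟨fun k => hS.1 _, (Equiv.sum_comp (Equiv.swap i j) S).trans hS.2⟩
  set F := fun S => q S + ∑ k, g k (S k)
  obtain ⟨t, ht, hneg⟩ := exists_mem_Ioo_mul_mul_log_add_mul_neg (mul_pos hκ hj) (F T - F S)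
  set P := (1 - t) • S + t • T
  have hP : P ∈ cappedSimplex ι β :=
    convex_cappedSimplex β hS hT (sub_nonneg.2 ht.2.le) ht.1.le (sub_add_cancel 1 t)
  have hgP : ∀ k, g k (P k) ≤
      (1 - t) * g k (S k) + t * g k (T k) + if k = i then κ * S j * (t * log t) else 0 := by
    intro k
    split_ifs with hk
    · subst hk
      have := apply_mul_le_of_convexOn_sub_mul_mul_log (hg k) ⟨hj, (hS.1 j).2⟩ ht
      simpa [P, T, hi0, mul_comm t] using this
    · have hgk := (strictConvexOn_of_convexOn_sub_mul_mul_log hκ (hg k)).convexOn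
      simpa [P] using hgk.2 (hS.1 k) (hT.1 k) (sub_nonneg.2 ht.2.le) ht.1.le (sub_add_cancel 1 t)
  have hgsum : ∑ k, g k (P k) ≤ (1 - t) * ∑ k, g k (S k) + t * ∑ k, g k (T k)
      + κ * S j * (t * log t) := by
    refine (Finset.sum_le_sum fun k _ => hgP k).trans_eq ?_
    simp [Finset.sum_add_distrib, Finset.mul_sum]
  have hqP : q P ≤ (1 - t) * q S + t * q T :=
    hq.2 hS hT (sub_nonneg.2 ht.2.le) ht.1.le (sub_add_cancel 1 t)
  have hFP : F S ≤ F P := hmin hP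
  simp only [F] at hFP hneg
  linarith

theorem mem_Ioo_of_isMinOn_cappedSimplex {q : (ι → ℝ) → ℝ} {g : ι → ℝ → ℝ} {κ₀ κ₁ β : ℝ}
    (hκ₀ : 0 < κ₀) (hκ₁ : 0 < κ₁) (hq : ConvexOn ℝ (cappedSimplex ι β) q)
    (hg₀ : ∀ k, ConvexOn ℝ (Icc 0 1) fun x => g k x - κ₀ * (x * log x))
    (hg₁ : ∀ k, ConvexOn ℝ (Icc 0 1) fun x => g k x - κ₁ * ((1 - x) * log (1 - x)))
    (hβ₀ : 0 < β) (hβ₁ : β < Fintype.card ι) {S : ι → ℝ} (hS : S ∈ cappedSimplex ι β)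
    (hmin : IsMinOn (fun S => q S + ∑ k, g k (S k)) (cappedSimplex ι β) S) (i : ι) :
    S i ∈ Ioo 0 1 := by
  refine ⟨pos_of_isMinOn_cappedSimplex hκ₀ hq hg₀ hβ₀ hS hmin i, ?_⟩
  have hreflect := preimage_one_sub_cappedSimplex (ι := ι) β
  have hq' : ConvexOn ℝ (cappedSimplex ι (Fintype.card ι - β)) fun S => q (1 - S) :=
    hreflect ▸ hq.comp_const_sub 1
  have hg' : ∀ k, ConvexOn ℝ (Icc 0 1) fun x => g k (1 - x) - κ₁ * (x * log x) := fun k => by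
    simpa [preimage_const_sub_Icc] using (hg₁ k).comp_const_sub 1
  have hS' : 1 - S ∈ cappedSimplex ι (Fintype.card ι - β) := by
    rw [← hreflect, mem_preimage, sub_sub_cancel]
    exact hS
  have hmin' : IsMinOn (fun S => q (1 - S) + ∑ k, g k (1 - S k))
      (cappedSimplex ι (Fintype.card ι - β)) (1 - S) := fun T hT => by
    rw [← hreflect] at hT
    simpa using hmin hT
  simpa using pos_of_isMinOn_cappedSimplex hκ₁ hq' hg' (sub_pos.2 hβ₁) hS' hmin' i

end CappedSimplex

theorem stmt11_general (N : ℕ) (hN : 1 ≤ N) (σw σn σwn : ℝ)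
    (hσw : 0 < σw) (hσn : 0 < σn)
    (c : Fin N → ℝ) (Q : Matrix (Fin N) (Fin N) ℝ) (hQ : Q.PosSemidef)
    (S0 : Fin N → ℝ) (hS0 : ∀ i, S0 i ∈ Set.Ioo (0 : ℝ) 1) :
    let β : ℝ := ∑ i, S0 i
    let Φ : ℝ → ℝ := fun x => x * Real.log x
    let J : (Fin N → ℝ) → ℝ := fun S =>
      (1 / 2) * dotProduct (S - S0) (Q.mulVec (S - S0)) +
      ∑ i, (σw * (Φ (S i) - S i) + σn * (Φ (1 - S i) - (1 - S i)) + σwn * c i * S i)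
    let K : Set (Fin N → ℝ) :=
      {S | (∀ i, S i ∈ Set.Icc (0 : ℝ) 1) ∧ ∑ i, S i = β}
    ∃ Sstar ∈ K, (∀ i, Sstar i ∈ Set.Ioo (0 : ℝ) 1) ∧ IsMinOn J K Sstar ∧
      ∀ S ∈ K, IsMinOn J K S → S = Sstar := by
  intro β Φ J K
  have hq : ConvexOn ℝ K fun S => (1 / 2) * (S - S0) ⬝ᵥ Q *ᵥ (S - S0) :=
    ((hQ.convexOn_dotProduct_mulVec_sub S0).smul (by norm_num)).subset (subset_univ K)
      (convex_cappedSimplex β)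
  have hg₀ : ∀ k, ConvexOn ℝ (Icc 0 1) fun x =>
      σw * (Φ x - x) + σn * (Φ (1 - x) - (1 - x)) + σwn * c k * x - σw * (x * log x) :=
    fun k => (convexOn_mul_log_add_mul_log_one_sub le_rfl hσn.le (σwn * c k - σw + σn) (-σn))
      |>.congr fun x _ => by simp only [Φ]; ring
  have hg₁ : ∀ k, ConvexOn ℝ (Icc 0 1) fun x =>
      σw * (Φ x - x) + σn * (Φ (1 - x) - (1 - x)) + σwn * c k * x
        - σn * ((1 - x) * log (1 - x)) :=
    fun k => (convexOn_mul_log_add_mul_log_one_sub hσw.le le_rfl (σwn * c k - σw + σn) (-σn))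
      |>.congr fun x _ => by simp only [Φ]; ring
  have hN' : (Finset.univ : Finset (Fin N)).Nonempty := ⟨⟨0, hN⟩, Finset.mem_univ _⟩
  have hβ₀ : 0 < β := Finset.sum_pos (fun i _ => (hS0 i).1) hN'
  have hβ₁ : β < Fintype.card (Fin N) := by
    simpa using Finset.sum_lt_sum_of_nonempty hN' fun i _ => (hS0 i).2
  have hJ : Continuous J := by
    have hΦ : Continuous Φ := continuous_mul_log
    fun_prop
  obtain ⟨S, hSK, hmin⟩ := (isCompact_cappedSimplex β).exists_isMinOn
    ⟨S0, fun i => Ioo_subset_Icc_self (hS0 i), rfl⟩ hJ.continuousOn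
  exact ⟨S, hSK, mem_Ioo_of_isMinOn_cappedSimplex hσw hσn hq hg₀ hg₁ hβ₀ hβ₁ hSK hmin, hmin,
    fun T hT hminT =>
      (strictConvexOn_cappedSimplex_add_sum hσw hq hg₀).eq_of_isMinOn hminT hmin hT hSK⟩

/-- Unique solvability and bound preservation for the first-order convex-splitting scheme
(finite-dimensional core): the discrete energy functional `J` attains its minimum over the
constrained set `K` at a unique point, and this minimizer has all components in `(0,1)`. -/
theorem stmt11 (N : ℕ) (hN : 1 ≤ N) (σw σn σwn : ℝ)
    (hσw : 0 < σw) (hσn : 0 < σn) (hσwn : 0 < σwn)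
    (c : Fin N → ℝ) (Q : Matrix (Fin N) (Fin N) ℝ) (hQ : Q.PosSemidef)
    (S0 : Fin N → ℝ) (hS0 : ∀ i, S0 i ∈ Set.Ioo (0 : ℝ) 1) :
    let β : ℝ := ∑ i, S0 i
    let Φ : ℝ → ℝ := fun x => x * Real.log x
    let J : (Fin N → ℝ) → ℝ := fun S =>
      (1 / 2) * dotProduct (S - S0) (Q.mulVec (S - S0)) +
      ∑ i, (σw * (Φ (S i) - S i) + σn * (Φ (1 - S i) - (1 - S i)) + σwn * c i * S i)
    let K : Set (Fin N → ℝ) :=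
      {S | (∀ i, S i ∈ Set.Icc (0 : ℝ) 1) ∧ ∑ i, S i = β}
    ∃ Sstar ∈ K, (∀ i, Sstar i ∈ Set.Ioo (0 : ℝ) 1) ∧ IsMinOn J K Sstar ∧
      ∀ S ∈ K, IsMinOn J K S → S = Sstar :=
  stmt11_general N hN σw σn σwn hσw hσn c Q hQ S0 hS0
end

section
/- Let N ≥ 1, σ_w, σ_n, σ_wn > 0, Δt > 0, let φ ∈ ℝ^N with φ_i > 0 for all i, and let A_w, A_n be symmetric positive-semidefinite real N×N matrices. Let s, s' ∈ ℝ^N with 0 < s_i < 1 and 0 < s'_i < 1 for all i, let p ∈ ℝ^N, and define μ_w, μ_n ∈ ℝ^N by μ_{w,i} = σ_w·ln s'_i + σ_wn·(1 − s_i) and μ_{n,i} = σ_n·ln(1 − s'_i) + σ_wn·s_i. Assume the first-order scheme relations hold: for every i, φ_i·(s'_i − s_i)/Δt = −(A_w(p + μ_w))_i and φ_i·((1 − s'_i) − (1 − s_i))/Δt = −(A_n(p + μ_n))_i. Then, with F(s) = σ_w·s·(ln s − 1) + σ_n·(1 − s)·(ln(1 − s) − 1) + σ_wn·s·(1 − s),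 the discrete energy E(v) = Σ_i φ_i·F(v_i) satisfies (E(s') − E(s))/Δt ≤ −(p + μ_w)ᵀ A_w (p + μ_w) − (p + μ_n)ᵀ A_n (p + μ_n) ≤ 0. -/
/-!
The free energy splits as `F = F_c + F_e` with a convex entropy part
`F_c(x) = σw x (log x - 1) + σn (1 - x)(log (1 - x) - 1)` and a concave part `F_e(x) = σwn x (1 - x)`.
The scheme treats `F_c` implicitly and `F_e` explicitly, so the tangent inequalities
`F_c(s') - F_c(s) ≤ F_c'(s')(s' - s)` and `F_e(s') - F_e(s) ≤ F_e'(s)(s' - s)` bound each cell's energy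
change by `μw (s' - s) + μn ((1 - s') - (1 - s))`. Weighting by `φ / Δt`, the scheme turns this into
`-μw ⬝ A_w (p + μw) - μn ⬝ A_n (p + μn)`, and since the two fluxes add up to zero the pressure can be
inserted for free, giving the two quadratic forms, which are nonnegative.
-/

open Real Finset Matrix

namespace Real

theorem mul_log_sub_log_le {a b : ℝ} (ha : 0 < a) (hb : 0 < b) : a * (log b - log a) ≤ b - a := by
  have h := log_le_sub_one_of_pos (div_pos hb ha)
  rw [log_div hb.ne' ha.ne'] at h
  calc a * (log b - log a) ≤ a * (b / a - 1) := mul_le_mul_of_nonneg_left h ha.le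
    _ = b - a := by field_simp

theorem mul_log_sub_one_sub_le {a b : ℝ} (ha : 0 < a) (hb : 0 < b) :
    b * (log b - 1) - a * (log a - 1) ≤ log b * (b - a) := by
  linear_combination mul_log_sub_log_le ha hb

end Real

noncomputable def freeEnergy (σw σn σwn x : ℝ) : ℝ :=
  σw * x * (log x - 1) + σn * (1 - x) * (log (1 - x) - 1) + σwn * x * (1 - x)

theorem freeEnergy_sub_le {σw σn σwn a b : ℝ} (hσw : 0 ≤ σw) (hσn : 0 ≤ σn) (hσwn : 0 ≤ σwn)
    (ha : a ∈ Set.Ioo (0 : ℝ) 1) (hb : b ∈ Set.Ioo (0 : ℝ) 1) :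
    freeEnergy σw σn σwn b - freeEnergy σw σn σwn a ≤
      (σw * log b + σwn * (1 - a)) * (b - a) + (σn * log (1 - b) + σwn * a) * ((1 - b) - (1 - a)) := by
  obtain ⟨ha₀, ha₁⟩ := ha
  obtain ⟨hb₀, hb₁⟩ := hb
  have hw := mul_le_mul_of_nonneg_left (mul_log_sub_one_sub_le ha₀ hb₀) hσw
  have hn := mul_le_mul_of_nonneg_left
    (mul_log_sub_one_sub_le (sub_pos.mpr ha₁) (sub_pos.mpr hb₁)) hσn
  have hwn := mul_nonneg hσwn (sq_nonneg (b - a))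
  unfold freeEnergy
  linear_combination hw + hn + hwn

theorem dotProduct_add_add_dotProduct_add_of_add_eq_zero {ι R : Type*} [Fintype ι] [CommRing R]
    {p a b g h : ι → R} (hgh : g + h = 0) :
    (p + a) ⬝ᵥ g + (p + b) ⬝ᵥ h = a ⬝ᵥ g + b ⬝ᵥ h := by
  rw [add_dotProduct, add_dotProduct, add_add_add_comm, ← dotProduct_add, hgh, dotProduct_zero,
    zero_add]

theorem stmt13_general (N : ℕ) (σw σn σwn Δt : ℝ)
    (hσw : 0 < σw) (hσn : 0 < σn) (hσwn : 0 < σwn) (hΔt : 0 < Δt)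
    (φ : Fin N → ℝ) (hφ : ∀ i, 0 < φ i)
    (Aw An : Matrix (Fin N) (Fin N) ℝ) (hAw : Aw.PosSemidef) (hAn : An.PosSemidef)
    (s s' p : Fin N → ℝ)
    (hs : ∀ i, s i ∈ Set.Ioo (0 : ℝ) 1) (hs' : ∀ i, s' i ∈ Set.Ioo (0 : ℝ) 1)
    (μw μn : Fin N → ℝ)
    (hμw : ∀ i, μw i = σw * Real.log (s' i) + σwn * (1 - s i))
    (hμn : ∀ i, μn i = σn * Real.log (1 - s' i) + σwn * s i)
    (hschemew : ∀ i, φ i * (s' i - s i) / Δt = -(Aw.mulVec (p + μw)) i)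
    (hschemen : ∀ i, φ i * ((1 - s' i) - (1 - s i)) / Δt = -(An.mulVec (p + μn)) i) :
    let F : ℝ → ℝ := fun x => σw * x * (Real.log x - 1) +
      σn * (1 - x) * (Real.log (1 - x) - 1) + σwn * x * (1 - x)
    let E : (Fin N → ℝ) → ℝ := fun v => ∑ i, φ i * F (v i)
    (E s' - E s) / Δt ≤
        -dotProduct (p + μw) (Aw.mulVec (p + μw))
          - dotProduct (p + μn) (An.mulVec (p + μn)) ∧
      -dotProduct (p + μw) (Aw.mulVec (p + μw))
          - dotProduct (p + μn) (An.mulVec (p + μn)) ≤ 0 := by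
  intro F E
  have hcell (i : Fin N) : φ i * (F (s' i) - F (s i)) / Δt ≤
      μw i * -(Aw *ᵥ (p + μw)) i + μn i * -(An *ᵥ (p + μn)) i := by
    have hF : F (s' i) - F (s i) ≤ μw i * (s' i - s i) + μn i * ((1 - s' i) - (1 - s i)) := by
      rw [hμw, hμn]
      exact freeEnergy_sub_le hσw.le hσn.le hσwn.le (hs i) (hs' i)
    rw [← hschemew, ← hschemen]
    calc φ i * (F (s' i) - F (s i)) / Δt = φ i / Δt * (F (s' i) - F (s i)) := by ring
      _ ≤ φ i / Δt * (μw i * (s' i - s i) + μn i * ((1 - s' i) - (1 - s i))) :=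
        mul_le_mul_of_nonneg_left hF (div_pos (hφ i) hΔt).le
      _ = _ := by ring
  have hflux : Aw *ᵥ (p + μw) + An *ᵥ (p + μn) = 0 := by
    ext i
    simp only [Pi.add_apply, Pi.zero_apply]
    linear_combination hschemew i + hschemen i
  refine ⟨?_, ?_⟩
  · calc (E s' - E s) / Δt = ∑ i, φ i * (F (s' i) - F (s i)) / Δt := by
          simp only [E, ← sum_sub_distrib, sum_div, mul_sub]
      _ ≤ ∑ i, (μw i * -(Aw *ᵥ (p + μw)) i + μn i * -(An *ᵥ (p + μn)) i) :=
        sum_le_sum fun i _ => hcell i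
      _ = -(μw ⬝ᵥ Aw *ᵥ (p + μw) + μn ⬝ᵥ An *ᵥ (p + μn)) := by
        simp only [dotProduct, mul_neg, sum_add_distrib, sum_neg_distrib, neg_add]
      _ = _ := by
        rw [← dotProduct_add_add_dotProduct_add_of_add_eq_zero hflux, neg_add, sub_eq_add_neg]
  · have hw := hAw.dotProduct_mulVec_nonneg (p + μw)
    have hn := hAn.dotProduct_mulVec_nonneg (p + μn)
    simp only [star_trivial] at hw hn
    linarith

/-- Original energy dissipation law for the first-order convex-splitting scheme
(abstract finite-dimensional formulation). -/
theorem stmt13 (N : ℕ) (hN : 1 ≤ N) (σw σn σwn Δt : ℝ)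
    (hσw : 0 < σw) (hσn : 0 < σn) (hσwn : 0 < σwn) (hΔt : 0 < Δt)
    (φ : Fin N → ℝ) (hφ : ∀ i, 0 < φ i)
    (Aw An : Matrix (Fin N) (Fin N) ℝ) (hAw : Aw.PosSemidef) (hAn : An.PosSemidef)
    (s s' p : Fin N → ℝ)
    (hs : ∀ i, s i ∈ Set.Ioo (0 : ℝ) 1) (hs' : ∀ i, s' i ∈ Set.Ioo (0 : ℝ) 1)
    (μw μn : Fin N → ℝ)
    (hμw : ∀ i, μw i = σw * Real.log (s' i) + σwn * (1 - s i))
    (hμn : ∀ i, μn i = σn * Real.log (1 - s' i) + σwn * s i)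
    (hschemew : ∀ i, φ i * (s' i - s i) / Δt = -(Aw.mulVec (p + μw)) i)
    (hschemen : ∀ i, φ i * ((1 - s' i) - (1 - s i)) / Δt = -(An.mulVec (p + μn)) i) :
    let F : ℝ → ℝ := fun x => σw * x * (Real.log x - 1) +
      σn * (1 - x) * (Real.log (1 - x) - 1) + σwn * x * (1 - x)
    let E : (Fin N → ℝ) → ℝ := fun v => ∑ i, φ i * F (v i)
    (E s' - E s) / Δt ≤
        -dotProduct (p + μw) (Aw.mulVec (p + μw))
          - dotProduct (p + μn) (An.mulVec (p + μn)) ∧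
      -dotProduct (p + μw) (Aw.mulVec (p + μw))
          - dotProduct (p + μn) (An.mulVec (p + μn)) ≤ 0 :=
  stmt13_general N σw σn σwn Δt hσw hσn hσwn hΔt φ hφ Aw An hAw hAn s s' p hs hs' μw μn hμw hμn
    hschemew hschemen
end

section
/- Let Ω = [a₁, b₁] × [a₂, b₂] ⊂ ℝ² with a₁ < b₁, a₂ < b₂, let T > 0, and let K > 0, η_w > 0, η_n > 0, σ_w > 0, σ_n > 0, σ_wn > 0 and m > 0 be constants. Let φ : Ω → ℝ be continuous with 0 < φ < 1, and let S_w and p be real-valued functions, continuously differentiable in time and twice continuously differentiable in space on an open neighborhood of [0, T] × Ω, with 0 < S_w < 1; set S_n = 1 − S_w, μ_w = σ_w·ln S_w + σ_wn·(1 − S_w), μ_n = σ_n·ln S_n + σ_wn·(1 − S_n), λ_α(s) = s^m/η_α, and u_α = −λ_α(S_α)·K·∇(p + μ_α) for α ∈ {w, n}, where ∇ is the spatial gradient. Assume that on [0, T] × Ω the equations φ·∂_t S_α + ∇·u_α = 0 hold for α = w, n, and that u_α · n = 0 on [0, T] × ∂Ω, where n is the outward unit normal of the rectangle Ω. Then for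 every t ∈ (0, T), the total free energy E(t) = ∫_Ω φ(x)·[σ_w·S_w·(ln S_w − 1) + σ_n·S_n·(ln S_n − 1) + σ_wn·S_w·S_n](t, x) dx is differentiable and satisfies dE/dt = −Σ_{α ∈ {w,n}} ∫_Ω λ_α(S_α)·K·|∇(p + μ_α)|²(t, x) dx ≤ 0. -/
/-!
Differentiating under the integral sign, `E'(t) = ∫_Ω φ (μ_w - μ_n) ∂ₜS_w`, because `μ_w - μ_n` is
the derivative of `s ↦ F(s, 1 - s)`. Since `∂ₜS_n = -∂ₜS_w`, the two mass balances give
`φ (μ_w - μ_n) ∂ₜS_w = -(p + μ_w) ∇·u_w - (p + μ_n) ∇·u_n = -∇·J + ∇(p + μ_w)·u_w + ∇(p + μ_n)·u_n`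
for the energy flux `J = (p + μ_w) u_w + (p + μ_n) u_n`. The integral of `∇·J` vanishes by the
divergence theorem and the no-flow condition, and Darcy's law turns `∇(p + μ_α)·u_α` into
`-λ_α K |∇(p + μ_α)|²`.
-/

open MeasureTheory

noncomputable def pd1 (f : ℝ × ℝ → ℝ) (x : ℝ × ℝ) : ℝ := fderiv ℝ f x (1, 0)

noncomputable def pd2 (f : ℝ × ℝ → ℝ) (x : ℝ × ℝ) : ℝ := fderiv ℝ f x (0, 1)

noncomputable def grad2 (f : ℝ × ℝ → ℝ) (x : ℝ × ℝ) : ℝ × ℝ := (pd1 f x, pd2 f x)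

noncomputable def div2 (u : ℝ × ℝ → ℝ × ℝ) (x : ℝ × ℝ) : ℝ :=
  fderiv ℝ (fun y => (u y).1) x (1, 0) + fderiv ℝ (fun y => (u y).2) x (0, 1)

open Set Topology Function

noncomputable def freeEnergyDensity (σw σn σwn sw sn : ℝ) : ℝ :=
  σw * sw * (Real.log sw - 1) + σn * sn * (Real.log sn - 1) + σwn * sw * sn

-- `μ_α = σ_α ln S_α + σ_wn S_β`, written with `S_β = 1 - S_α`.
noncomputable def chemicalPotential (σ σwn s : ℝ) : ℝ :=
  σ * Real.log s + σwn * (1 - s)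

theorem hasDerivAt_freeEnergyDensity (σw σn σwn : ℝ) {s : ℝ} (hs : s ∈ Ioo (0 : ℝ) 1) :
    HasDerivAt (fun s => freeEnergyDensity σw σn σwn s (1 - s))
      (chemicalPotential σw σwn s - chemicalPotential σn σwn (1 - s)) s := by
  have hs0 : s ≠ 0 := hs.1.ne'
  have hs1 : 1 - s ≠ 0 := (sub_pos.2 hs.2).ne'
  have hid := hasDerivAt_id' s
  have hsub : HasDerivAt (fun s : ℝ => 1 - s) (-1) s := by simpa using hid.const_sub 1
  have h := (((hid.const_mul σw).mul ((hid.log hs0).sub_const 1)).add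
    ((hsub.const_mul σn).mul ((hsub.log hs1).sub_const 1))).add ((hid.const_mul σwn).mul hsub)
  refine h.congr_deriv ?_
  unfold chemicalPotential
  field_simp
  ring

theorem continuousOn_freeEnergyDensity (σw σn σwn : ℝ) :
    ContinuousOn (fun s => freeEnergyDensity σw σn σwn s (1 - s)) (Ioo 0 1) :=
  fun _ hs => (hasDerivAt_freeEnergyDensity σw σn σwn hs).continuousAt.continuousWithinAt

theorem hasDerivAt_setIntegral_of_continuousOn {α E : Type*} [TopologicalSpace α] [T2Space α]
    [MeasurableSpace α] [OpensMeasurableSpace α] {μ : Measure α} [IsFiniteMeasureOnCompacts μ]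
    [NormedAddCommGroup E] [NormedSpace ℝ E] {Ω : Set α} {s : Set ℝ} {t : ℝ} {F F' : ℝ → α → E}
    (hΩ : IsCompact Ω) (hs : s ∈ 𝓝 t) (hsc : IsCompact s)
    (hF : ContinuousOn (uncurry F) (s ×ˢ Ω)) (hF' : ContinuousOn (uncurry F') (s ×ˢ Ω))
    (hderiv : ∀ τ ∈ s, ∀ x ∈ Ω, HasDerivAt (F · x) (F' τ x) τ) :
    HasDerivAt (fun τ => ∫ x in Ω, F τ x ∂μ) (∫ x in Ω, F' t x ∂μ) t := by
  have hΩm := hΩ.measurableSet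
  have hslice : ∀ {G : ℝ → α → E}, ContinuousOn (uncurry G) (s ×ˢ Ω) →
      ∀ τ ∈ s, ContinuousOn (G τ) Ω := fun hG τ hτ =>
    hG.comp (Continuous.prodMk_right τ).continuousOn fun _ hx => ⟨hτ, hx⟩
  obtain ⟨C, hC⟩ := (hsc.prod hΩ).exists_bound_of_continuousOn hF'
  refine (hasDerivAt_integral_of_dominated_loc_of_deriv_le (bound := fun _ => C)
    hs ?_ ?_ ?_ ?_ ?_ ?_).2
  · filter_upwards [hs] with τ hτ
    exact (hslice hF τ hτ).aestronglyMeasurable_of_isCompact hΩ hΩm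
  · exact (hslice hF t (mem_of_mem_nhds hs)).integrableOn_compact hΩ
  · exact (hslice hF' t (mem_of_mem_nhds hs)).aestronglyMeasurable_of_isCompact hΩ hΩm
  · exact ae_restrict_of_forall_mem hΩm fun x hx τ hτ => hC (τ, x) ⟨hτ, hx⟩
  · exact integrableOn_const hΩ.measure_lt_top.ne
  · exact ae_restrict_of_forall_mem hΩm fun x hx τ hτ => hderiv τ hτ x hx

theorem ContDiffOn.hasDerivAt_partial_fst {E F : Type*} [NormedAddCommGroup E] [NormedSpace ℝ E]
    [NormedAddCommGroup F] [NormedSpace ℝ F] {f : ℝ × E → F} {V : Set (ℝ × E)}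
    (hf : ContDiffOn ℝ 1 f V) (hV : IsOpen V) {τ : ℝ} {x : E} (hq : (τ, x) ∈ V) :
    HasDerivAt (fun τ' => f (τ', x)) (fderiv ℝ f (τ, x) (1, 0)) τ :=
  ((hf.contDiffAt (hV.mem_nhds hq)).differentiableAt one_ne_zero).hasFDerivAt.comp_hasDerivAt τ
    ((hasDerivAt_id τ).prodMk (hasDerivAt_const τ x))

theorem hasDerivAt_setIntegral_freeEnergyDensity {E : Type*} [NormedAddCommGroup E]
    [NormedSpace ℝ E] [MeasurableSpace E] [OpensMeasurableSpace E] {μ : Measure E}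
    [IsFiniteMeasureOnCompacts μ] (σw σn σwn : ℝ) {S Sn : ℝ → E → ℝ} {φ : E → ℝ}
    {V : Set (ℝ × E)} {Ω : Set E} {t : ℝ} (hV : IsOpen V)
    (hS : ContDiffOn ℝ 1 (fun q => S q.1 q.2) V) (hS01 : ∀ q ∈ V, S q.1 q.2 ∈ Ioo 0 1)
    (hΩ : IsCompact Ω) (htΩ : {t} ×ˢ Ω ⊆ V) (hφ : ContinuousOn φ Ω)
    (hSn : ∀ τ x, Sn τ x = 1 - S τ x) :
    HasDerivAt (fun τ => ∫ x in Ω, φ x * freeEnergyDensity σw σn σwn (S τ x) (Sn τ x) ∂μ)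
      (∫ x in Ω, φ x * ((chemicalPotential σw σwn (S t x) -
        chemicalPotential σn σwn (1 - S t x)) * deriv (fun τ => S τ x) t) ∂μ) t := by
  obtain ⟨u, v, hu, -, htu, hΩv, huv⟩ := generalized_tube_lemma isCompact_singleton hΩ hV htΩ
  obtain ⟨s, hs, hsu, hsc⟩ := local_compact_nhds (hu.mem_nhds (htu rfl))
  have hsV : s ×ˢ Ω ⊆ V := (prod_mono hsu hΩv).trans huv
  have hSs : MapsTo (fun q : ℝ × E => S q.1 q.2) (s ×ˢ Ω) (Ioo 0 1) := fun q hq => hS01 q (hsV hq)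
  have hSc := hS.continuousOn.mono hsV
  have hφc : ContinuousOn (fun q : ℝ × E => φ q.2) (s ×ˢ Ω) :=
    hφ.comp continuousOn_snd fun _ hq => hq.2
  have hgap : ContinuousOn (fun s => chemicalPotential σw σwn s -
      chemicalPotential σn σwn (1 - s)) (Ioo 0 1) := by
    have h0 : ∀ s ∈ Ioo (0 : ℝ) 1, s ≠ 0 := fun s hs => hs.1.ne'
    have h1 : ∀ s ∈ Ioo (0 : ℝ) 1, 1 - s ≠ 0 := fun s hs => (sub_pos.2 hs.2).ne'
    unfold chemicalPotential
    fun_prop (disch := assumption)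
  have hdot : ContinuousOn (fun q => fderiv ℝ (fun q : ℝ × E => S q.1 q.2) q (1, 0)) V :=
    (hS.continuousOn_fderiv_of_isOpen hV le_rfl).clm_apply continuousOn_const
  have hderiv : ∀ q ∈ V, HasDerivAt (fun τ => S τ q.2)
      (fderiv ℝ (fun q : ℝ × E => S q.1 q.2) q (1, 0)) q.1 :=
    fun q hq => hS.hasDerivAt_partial_fst hV hq
  have key := hasDerivAt_setIntegral_of_continuousOn (μ := μ) hΩ hs hsc
    (F := fun τ x => φ x * freeEnergyDensity σw σn σwn (S τ x) (1 - S τ x))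
    (F' := fun τ x => φ x * ((chemicalPotential σw σwn (S τ x) -
      chemicalPotential σn σwn (1 - S τ x)) * fderiv ℝ (fun q : ℝ × E => S q.1 q.2) (τ, x) (1, 0)))
    (hφc.mul ((continuousOn_freeEnergyDensity σw σn σwn).comp hSc hSs))
    (hφc.mul ((hgap.comp hSc hSs).mul (hdot.mono hsV)))
    (fun τ hτ x hx => by
      have hSτx : S τ x ∈ Ioo 0 1 := hSs (x := (τ, x)) ⟨hτ, hx⟩
      exact ((hasDerivAt_freeEnergyDensity σw σn σwn hSτx).comp τ
        (hderiv (τ, x) (hsV ⟨hτ, hx⟩))).const_mul (φ x))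
  simp only [hSn]
  refine key.congr_deriv (setIntegral_congr_fun hΩ.measurableSet fun x hx => ?_)
  simp only [(hderiv (t, x) (htΩ ⟨rfl, hx⟩)).deriv]

theorem ContDiffOn.grad2_of_isOpen {f : ℝ × ℝ → ℝ} {V : Set (ℝ × ℝ)} {m n : WithTop ℕ∞}
    (hf : ContDiffOn ℝ n f V) (hV : IsOpen V) (hmn : m + 1 ≤ n) :
    ContDiffOn ℝ m (grad2 f) V :=
  have hf' := hf.fderiv_of_isOpen hV hmn
  (hf'.clm_apply contDiffOn_const).prodMk (hf'.clm_apply contDiffOn_const)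

theorem ContDiffOn.continuousOn_div2 {u : ℝ × ℝ → ℝ × ℝ} {V : Set (ℝ × ℝ)}
    (hu : ContDiffOn ℝ 1 u V) (hV : IsOpen V) : ContinuousOn (div2 u) V :=
  (((contDiff_fst.comp_contDiffOn hu).continuousOn_fderiv_of_isOpen hV le_rfl).clm_apply
    continuousOn_const).add
  (((contDiff_snd.comp_contDiffOn hu).continuousOn_fderiv_of_isOpen hV le_rfl).clm_apply
    continuousOn_const)

theorem div2_add {u v : ℝ × ℝ → ℝ × ℝ} {x : ℝ × ℝ} (hu : DifferentiableAt ℝ u x)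
    (hv : DifferentiableAt ℝ v x) : div2 (fun y => u y + v y) x = div2 u x + div2 v x := by
  simp only [div2, Prod.fst_add, Prod.snd_add, fderiv_fun_add hu.fst hv.fst,
    fderiv_fun_add hu.snd hv.snd, add_apply]
  ring

theorem div2_smul {h : ℝ × ℝ → ℝ} {u : ℝ × ℝ → ℝ × ℝ} {x : ℝ × ℝ} (hh : DifferentiableAt ℝ h x)
    (hu : DifferentiableAt ℝ u x) :
    div2 (fun y => h y • u y) x =
      (grad2 h x).1 * (u x).1 + (grad2 h x).2 * (u x).2 + h x * div2 u x := by
  simp only [div2, grad2, pd1, pd2, Prod.smul_fst, Prod.smul_snd, smul_eq_mul,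
    fderiv_fun_mul hh hu.fst, fderiv_fun_mul hh hu.snd, add_apply, smul_apply]
  ring

theorem setIntegral_div2_eq_zero {a₁ b₁ a₂ b₂ : ℝ} (h₁ : a₁ ≤ b₁) (h₂ : a₂ ≤ b₂)
    {V : Set (ℝ × ℝ)} (hV : IsOpen V) (hΩV : Icc a₁ b₁ ×ˢ Icc a₂ b₂ ⊆ V)
    {u : ℝ × ℝ → ℝ × ℝ} (hu : ContDiffOn ℝ 1 u V)
    (hx : ∀ y ∈ Icc a₂ b₂, (u (a₁, y)).1 = 0 ∧ (u (b₁, y)).1 = 0)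
    (hy : ∀ x ∈ Icc a₁ b₁, (u (x, a₂)).2 = 0 ∧ (u (x, b₂)).2 = 0) :
    ∫ x in Icc a₁ b₁ ×ˢ Icc a₂ b₂, div2 u x = 0 := by
  have hΩ : Icc a₁ b₁ ×ˢ Icc a₂ b₂ = Icc (a₁, a₂) (b₁, b₂) := Icc_prod_Icc _ _ _ _
  have hdiff : ∀ x ∈ Icc a₁ b₁ ×ˢ Icc a₂ b₂, DifferentiableAt ℝ u x := fun x hx =>
    (hu.contDiffAt (hV.mem_nhds (hΩV hx))).differentiableAt one_ne_zero
  have hinterior : Ioo a₁ b₁ ×ˢ Ioo a₂ b₂ ⊆ Icc a₁ b₁ ×ˢ Icc a₂ b₂ :=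
    prod_mono Ioo_subset_Icc_self Ioo_subset_Icc_self
  have hzero : ∀ {c d : ℝ} {g : ℝ → ℝ}, c ≤ d → (∀ z ∈ Icc c d, g z = 0) →
      ∫ z in c..d, g z = 0 := fun hcd hg => by
    rw [intervalIntegral.integral_congr (g := fun _ => 0) (uIcc_of_le hcd ▸ hg)]
    exact intervalIntegral.integral_zero
  rw [hΩ]
  refine (integral_divergence_prod_Icc_of_hasFDerivAt_of_le (fun y => (u y).1) (fun y => (u y).2)
    (fun y => fderiv ℝ (fun y => (u y).1) y) (fun y => fderiv ℝ (fun y => (u y).2) y)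
    (a₁, a₂) (b₁, b₂) ⟨h₁, h₂⟩
    (fun x hx => (hdiff x (hΩ ▸ hx)).fst.continuousAt.continuousWithinAt)
    (fun x hx => (hdiff x (hΩ ▸ hx)).snd.continuousAt.continuousWithinAt)
    (fun x hx => (hdiff x (hinterior hx)).fst.hasFDerivAt)
    (fun x hx => (hdiff x (hinterior hx)).snd.hasFDerivAt)
    (((hu.continuousOn_div2 hV).mono (hΩ ▸ hΩV)).integrableOn_compact isCompact_Icc)).trans ?_
  rw [hzero h₁ fun x hx => (hy x hx).2, hzero h₁ fun x hx => (hy x hx).1,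
    hzero h₂ fun y hy => (hx y hy).2, hzero h₂ fun y hy => (hx y hy).1]
  ring

theorem contDiffOn_potential_and_darcyVelocity {S P μ : ℝ × ℝ → ℝ} {u : ℝ × ℝ → ℝ × ℝ}
    {V : Set (ℝ × ℝ)} {σ σwn m η K : ℝ} (hV : IsOpen V) (hS : ContDiffOn ℝ 2 S V)
    (hS0 : ∀ x ∈ V, S x ≠ 0) (hP : ContDiffOn ℝ 2 P V)
    (hμ : ∀ x, μ x = chemicalPotential σ σwn (S x))
    (hu : ∀ x, u x = (-(S x ^ m / η * K)) • grad2 (fun y => P y + μ y) x) :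
    ContDiffOn ℝ 2 (fun y => P y + μ y) V ∧ ContDiffOn ℝ 1 u V := by
  have hh : ContDiffOn ℝ 2 (fun y => P y + μ y) V :=
    hP.add (((contDiffOn_const.mul (hS.log hS0)).add
      (contDiffOn_const.mul (contDiffOn_const.sub hS))).congr fun x _ => hμ x)
  refine ⟨hh, ContDiffOn.congr ?_ fun x _ => hu x⟩
  exact ((((hS.of_le one_le_two).rpow_const_of_ne hS0).div_const η).mul contDiffOn_const).neg.smul
    (hh.grad2_of_isOpen hV le_rfl)

theorem ContinuousOn.darcyDissipation {S h : ℝ × ℝ → ℝ} {V : Set (ℝ × ℝ)} (hV : IsOpen V)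
    (hS : ContinuousOn S V) (hS0 : ∀ x ∈ V, S x ≠ 0) (hh : ContDiffOn ℝ 2 h V) (m η K : ℝ) :
    ContinuousOn (fun x => S x ^ m / η * K * ((grad2 h x).1 ^ 2 + (grad2 h x).2 ^ 2)) V :=
  have hg := (hh.grad2_of_isOpen hV (m := 0) (by norm_num)).continuousOn
  (((hS.rpow_const fun x hx => Or.inl (hS0 x hx)).div_const η).mul_const K).mul
    ((hg.fst.pow 2).add (hg.snd.pow 2))

theorem setIntegral_darcyDissipation_nonneg {α : Type*} [MeasurableSpace α] {μ : Measure α}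
    {Ω : Set α} (hΩ : MeasurableSet Ω) {S : α → ℝ} {g : α → ℝ × ℝ} {m η K : ℝ}
    (hS : ∀ x ∈ Ω, 0 ≤ S x) (hη : 0 ≤ η) (hK : 0 ≤ K) :
    0 ≤ ∫ x in Ω, S x ^ m / η * K * ((g x).1 ^ 2 + (g x).2 ^ 2) ∂μ :=
  setIntegral_nonneg hΩ fun x hx => by have := hS x hx; positivity

noncomputable def energyFlux (P μw μn : ℝ × ℝ → ℝ) (uw un : ℝ × ℝ → ℝ × ℝ) (x : ℝ × ℝ) :
    ℝ × ℝ :=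
  (P x + μw x) • uw x + (P x + μn x) • un x

theorem ContDiffOn.energyFlux {P μw μn : ℝ × ℝ → ℝ} {uw un : ℝ × ℝ → ℝ × ℝ} {V : Set (ℝ × ℝ)}
    {n : WithTop ℕ∞} (hw : ContDiffOn ℝ n (fun y => P y + μw y) V)
    (hn : ContDiffOn ℝ n (fun y => P y + μn y) V) (huw : ContDiffOn ℝ n uw V)
    (hun : ContDiffOn ℝ n un V) : ContDiffOn ℝ n (energyFlux P μw μn uw un) V :=
  (hw.smul huw).add (hn.smul hun)

theorem div2_energyFlux {σw σn σwn m ηw ηn K Sdot : ℝ} {φ S Sn P μw μn : ℝ × ℝ → ℝ}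
    {uw un : ℝ × ℝ → ℝ × ℝ} {x : ℝ × ℝ}
    (hdw : DifferentiableAt ℝ (fun y => P y + μw y) x)
    (hdn : DifferentiableAt ℝ (fun y => P y + μn y) x)
    (hduw : DifferentiableAt ℝ uw x) (hdun : DifferentiableAt ℝ un x)
    (hSn : Sn x = 1 - S x) (hμw : μw x = chemicalPotential σw σwn (S x))
    (hμn : μn x = chemicalPotential σn σwn (Sn x))
    (huw : uw x = (-(S x ^ m / ηw * K)) • grad2 (fun y => P y + μw y) x)
    (hun : un x = (-(Sn x ^ m / ηn * K)) • grad2 (fun y => P y + μn y) x)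
    (hpdew : φ x * Sdot + div2 uw x = 0) (hpden : φ x * -Sdot + div2 un x = 0) :
    div2 (energyFlux P μw μn uw un) x =
      -(φ x * ((chemicalPotential σw σwn (S x) - chemicalPotential σn σwn (1 - S x)) * Sdot)) -
        S x ^ m / ηw * K *
          ((grad2 (fun y => P y + μw y) x).1 ^ 2 + (grad2 (fun y => P y + μw y) x).2 ^ 2) -
        Sn x ^ m / ηn * K *
          ((grad2 (fun y => P y + μn y) x).1 ^ 2 + (grad2 (fun y => P y + μn y) x).2 ^ 2) := by
  unfold energyFlux
  rw [div2_add (u := fun y => (P y + μw y) • uw y)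
    (v := fun y => (P y + μn y) • un y) (hdw.smul hduw) (hdn.smul hdun), div2_smul hdw hduw,
    div2_smul hdn hdun, huw, hun, ← hμw, ← hSn, ← hμn]
  simp only [Prod.smul_fst, Prod.smul_snd, smul_eq_mul]
  linear_combination (P x + μw x) * hpdew + (P x + μn x) * hpden

theorem setIntegral_chemicalPotential_mul_eq_neg_dissipation {a₁ b₁ a₂ b₂ : ℝ}
    (h₁ : a₁ ≤ b₁) (h₂ : a₂ ≤ b₂) {V : Set (ℝ × ℝ)} (hV : IsOpen V)
    (hΩV : Icc a₁ b₁ ×ˢ Icc a₂ b₂ ⊆ V) {σw σn σwn m ηw ηn K : ℝ}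
    {φ S Sn P μw μn Sdot : ℝ × ℝ → ℝ} {uw un : ℝ × ℝ → ℝ × ℝ}
    (hS : ContDiffOn ℝ 2 S V) (hS01 : ∀ x ∈ V, S x ∈ Ioo 0 1) (hP : ContDiffOn ℝ 2 P V)
    (hSn : ∀ x, Sn x = 1 - S x)
    (hμw : ∀ x, μw x = chemicalPotential σw σwn (S x))
    (hμn : ∀ x, μn x = chemicalPotential σn σwn (Sn x))
    (huw : ∀ x, uw x = (-(S x ^ m / ηw * K)) • grad2 (fun y => P y + μw y) x)
    (hun : ∀ x, un x = (-(Sn x ^ m / ηn * K)) • grad2 (fun y => P y + μn y) x)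
    (hpdew : ∀ x ∈ Icc a₁ b₁ ×ˢ Icc a₂ b₂, φ x * Sdot x + div2 uw x = 0)
    (hpden : ∀ x ∈ Icc a₁ b₁ ×ˢ Icc a₂ b₂, φ x * -Sdot x + div2 un x = 0)
    (hbcx : ∀ y ∈ Icc a₂ b₂, (uw (a₁, y)).1 = 0 ∧ (uw (b₁, y)).1 = 0 ∧
      (un (a₁, y)).1 = 0 ∧ (un (b₁, y)).1 = 0)
    (hbcy : ∀ x ∈ Icc a₁ b₁, (uw (x, a₂)).2 = 0 ∧ (uw (x, b₂)).2 = 0 ∧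
      (un (x, a₂)).2 = 0 ∧ (un (x, b₂)).2 = 0) :
    ∫ x in Icc a₁ b₁ ×ˢ Icc a₂ b₂, φ x * ((chemicalPotential σw σwn (S x) -
        chemicalPotential σn σwn (1 - S x)) * Sdot x) =
      -((∫ x in Icc a₁ b₁ ×ˢ Icc a₂ b₂, S x ^ m / ηw * K *
          ((grad2 (fun y => P y + μw y) x).1 ^ 2 + (grad2 (fun y => P y + μw y) x).2 ^ 2)) +
        ∫ x in Icc a₁ b₁ ×ˢ Icc a₂ b₂, Sn x ^ m / ηn * K *
          ((grad2 (fun y => P y + μn y) x).1 ^ 2 + (grad2 (fun y => P y + μn y) x).2 ^ 2)) := by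
  set Ω := Icc a₁ b₁ ×ˢ Icc a₂ b₂
  have hΩ : IsCompact Ω := isCompact_Icc.prod isCompact_Icc
  have hS0 : ∀ x ∈ V, S x ≠ 0 := fun x hx => (hS01 x hx).1.ne'
  have hSn0 : ∀ x ∈ V, Sn x ≠ 0 := fun x hx => hSn x ▸ (sub_pos.2 (hS01 x hx).2).ne'
  have hSn2 : ContDiffOn ℝ 2 Sn V := (contDiffOn_const.sub hS).congr fun x _ => hSn x
  obtain ⟨hhw, huw1⟩ := contDiffOn_potential_and_darcyVelocity hV hS hS0 hP hμw huw
  obtain ⟨hhn, hun1⟩ := contDiffOn_potential_and_darcyVelocity hV hSn2 hSn0 hP hμn hun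
  have hJ : ContDiffOn ℝ 1 (energyFlux P μw μn uw un) V :=
    (hhw.of_le one_le_two).energyFlux (hhn.of_le one_le_two) huw1 hun1
  have hdiff : ∀ {f : ℝ × ℝ → ℝ}, ContDiffOn ℝ 2 f V → ∀ x ∈ V, DifferentiableAt ℝ f x :=
    fun hf x hx => (hf.differentiableOn two_ne_zero).differentiableAt (hV.mem_nhds hx)
  have hdiff' : ∀ {u : ℝ × ℝ → ℝ × ℝ}, ContDiffOn ℝ 1 u V → ∀ x ∈ V, DifferentiableAt ℝ u x :=
    fun hu x hx => (hu.differentiableOn one_ne_zero).differentiableAt (hV.mem_nhds hx)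
  have hpointwise : EqOn (fun x => φ x * ((chemicalPotential σw σwn (S x) -
      chemicalPotential σn σwn (1 - S x)) * Sdot x)) (fun x => -div2 (energyFlux P μw μn uw un) x -
        S x ^ m / ηw * K *
          ((grad2 (fun y => P y + μw y) x).1 ^ 2 + (grad2 (fun y => P y + μw y) x).2 ^ 2) -
        Sn x ^ m / ηn * K *
          ((grad2 (fun y => P y + μn y) x).1 ^ 2 + (grad2 (fun y => P y + μn y) x).2 ^ 2)) Ω :=
    fun x hx => by
      dsimp only
      rw [div2_energyFlux (hdiff hhw x (hΩV hx)) (hdiff hhn x (hΩV hx)) (hdiff' huw1 x (hΩV hx))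
        (hdiff' hun1 x (hΩV hx)) (hSn x) (hμw x) (hμn x) (huw x) (hun x) (hpdew x hx)
        (hpden x hx)]
      ring
  have hflux : ∫ x in Ω, div2 (energyFlux P μw μn uw un) x = 0 := by
    refine setIntegral_div2_eq_zero h₁ h₂ hV hΩV hJ (fun y hy => ?_) (fun x hx => ?_)
    · obtain ⟨h1, h2, h3, h4⟩ := hbcx y hy
      simp [energyFlux, h1, h2, h3, h4]
    · obtain ⟨h1, h2, h3, h4⟩ := hbcy x hx
      simp [energyFlux, h1, h2, h3, h4]
  have hintw := ((ContinuousOn.darcyDissipation hV hS.continuousOn hS0 hhw m ηw K).mono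
    hΩV).integrableOn_compact (μ := volume) hΩ
  have hintn := ((ContinuousOn.darcyDissipation hV hSn2.continuousOn hSn0 hhn m ηn K).mono
    hΩV).integrableOn_compact (μ := volume) hΩ
  have hintdiv := ((hJ.continuousOn_div2 hV).mono hΩV).integrableOn_compact (μ := volume) hΩ
  rw [setIntegral_congr_fun hΩ.measurableSet hpointwise, integral_sub ?_ hintn,
    integral_sub ?_ hintw, integral_neg, hflux]
  · ring
  · exact hintdiv.neg
  · exact hintdiv.neg.sub hintw

theorem stmt15_general
    (a₁ b₁ a₂ b₂ T K ηw ηn σw σn σwn m : ℝ)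
    (hab₁ : a₁ < b₁) (hab₂ : a₂ < b₂)
    (hK : 0 < K) (hηw : 0 < ηw) (hηn : 0 < ηn)
    (Ω : Set (ℝ × ℝ)) (hΩ : Ω = Set.Icc a₁ b₁ ×ˢ Set.Icc a₂ b₂)
    -- porosity
    (φ : ℝ × ℝ → ℝ) (hφc : ContinuousOn φ Ω)
    -- regularity of `S_w` and `p` on an open neighborhood `U` of `[0,T] × Ω`:
    -- continuously differentiable in time (jointly C¹) and C² in space
    (U : Set (ℝ × (ℝ × ℝ))) (hUopen : IsOpen U) (hUsub : Set.Icc 0 T ×ˢ Ω ⊆ U)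
    (Sw p : ℝ → ℝ × ℝ → ℝ)
    (hSwC1 : ContDiffOn ℝ 1 (fun q : ℝ × (ℝ × ℝ) => Sw q.1 q.2) U)
    (hSwC2 : ∀ t : ℝ, ContDiffOn ℝ 2 (Sw t) {x : ℝ × ℝ | (t, x) ∈ U})
    (hpC2 : ∀ t : ℝ, ContDiffOn ℝ 2 (p t) {x : ℝ × ℝ | (t, x) ∈ U})
    -- bounds on the wetting-phase saturation
    (hSwbnd : ∀ t ∈ Set.Icc (0 : ℝ) T, ∀ x ∈ Ω, 0 < Sw t x ∧ Sw t x < 1)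
    -- non-wetting saturation, chemical potentials and Darcy velocities
    (Sn μw μn : ℝ → ℝ × ℝ → ℝ) (uw un : ℝ → ℝ × ℝ → ℝ × ℝ)
    (hSn : ∀ t x, Sn t x = 1 - Sw t x)
    (hμw : ∀ t x, μw t x = σw * Real.log (Sw t x) + σwn * (1 - Sw t x))
    (hμn : ∀ t x, μn t x = σn * Real.log (Sn t x) + σwn * (1 - Sn t x))
    (huw : ∀ t x, uw t x = (-((Sw t x) ^ m / ηw * K)) • grad2 (fun y => p t y + μw t y) x)
    (hun : ∀ t x, un t x = (-((Sn t x) ^ m / ηn * K)) • grad2 (fun y => p t y + μn t y) x)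
    -- mass conservation equations `φ ∂ₜ S_α + ∇·u_α = 0` on `[0,T] × Ω`
    (hpdew : ∀ t ∈ Set.Icc (0 : ℝ) T, ∀ x ∈ Ω,
      φ x * deriv (fun τ => Sw τ x) t + div2 (uw t) x = 0)
    (hpden : ∀ t ∈ Set.Icc (0 : ℝ) T, ∀ x ∈ Ω,
      φ x * deriv (fun τ => Sn τ x) t + div2 (un t) x = 0)
    -- no-flow boundary conditions `u_α · n = 0` on `[0,T] × ∂Ω`
    (hbcx : ∀ t ∈ Set.Icc (0 : ℝ) T, ∀ y ∈ Set.Icc a₂ b₂,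
      (uw t (a₁, y)).1 = 0 ∧ (uw t (b₁, y)).1 = 0 ∧
      (un t (a₁, y)).1 = 0 ∧ (un t (b₁, y)).1 = 0)
    (hbcy : ∀ t ∈ Set.Icc (0 : ℝ) T, ∀ x ∈ Set.Icc a₁ b₁,
      (uw t (x, a₂)).2 = 0 ∧ (uw t (x, b₂)).2 = 0 ∧
      (un t (x, a₂)).2 = 0 ∧ (un t (x, b₂)).2 = 0) :
    -- conclusion: energy dissipation law
    ∀ t ∈ Set.Ioo (0 : ℝ) T,
      let D : ℝ :=
        (∫ x in Ω, (Sw t x) ^ m / ηw * K *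
          ((grad2 (fun y => p t y + μw t y) x).1 ^ 2 +
           (grad2 (fun y => p t y + μw t y) x).2 ^ 2)) +
        (∫ x in Ω, (Sn t x) ^ m / ηn * K *
          ((grad2 (fun y => p t y + μn t y) x).1 ^ 2 +
           (grad2 (fun y => p t y + μn t y) x).2 ^ 2))
      HasDerivAt (fun τ => ∫ x in Ω, φ x *
          (σw * Sw τ x * (Real.log (Sw τ x) - 1) +
           σn * Sn τ x * (Real.log (Sn τ x) - 1) +
           σwn * Sw τ x * Sn τ x)) (-D) t ∧ -D ≤ 0 := by
  intro t ht D
  subst hΩ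
  have htI : t ∈ Icc (0 : ℝ) T := Ioo_subset_Icc_self ht
  set V := U ∩ (fun q : ℝ × (ℝ × ℝ) => Sw q.1 q.2) ⁻¹' Ioo 0 1
  have hV : IsOpen V := hSwC1.continuousOn.isOpen_inter_preimage hUopen isOpen_Ioo
  have htV : {t} ×ˢ (Icc a₁ b₁ ×ˢ Icc a₂ b₂) ⊆ V := by
    rintro ⟨τ, x⟩ ⟨rfl, hx⟩
    exact ⟨hUsub ⟨htI, hx⟩, hSwbnd τ htI x hx⟩
  have hE := hasDerivAt_setIntegral_freeEnergyDensity (μ := volume) σw σn σwn hV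
    (hSwC1.mono inter_subset_left) (fun q hq => hq.2) (isCompact_Icc.prod isCompact_Icc) htV hφc
    hSn
  have hSndot : ∀ x, deriv (fun τ => Sn τ x) t = -deriv (fun τ => Sw τ x) t := fun x => by
    simp only [hSn]
    exact deriv_const_sub 1
  have hdiss := setIntegral_chemicalPotential_mul_eq_neg_dissipation hab₁.le hab₂.le
    (hV.preimage (Continuous.prodMk_right t)) (fun x hx => htV ⟨rfl, hx⟩)
    ((hSwC2 t).mono fun x hx => hx.1) (fun x hx => hx.2) ((hpC2 t).mono fun x hx => hx.1)
    (hSn t) (hμw t) (hμn t) (huw t) (hun t) (hpdew t htI)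
    (fun x hx => hSndot x ▸ hpden t htI x hx) (hbcx t htI) (hbcy t htI)
  have hΩ : MeasurableSet (Icc a₁ b₁ ×ˢ Icc a₂ b₂) := measurableSet_Icc.prod measurableSet_Icc
  refine ⟨hE.congr_deriv hdiss, neg_nonpos.2 (add_nonneg ?_ ?_)⟩
  · exact setIntegral_darcyDissipation_nonneg hΩ (fun x hx => (hSwbnd t htI x hx).1.le) hηw.le
      hK.le
  · exact setIntegral_darcyDissipation_nonneg hΩ
      (fun x hx => hSn t x ▸ sub_nonneg.2 (hSwbnd t htI x hx).2.le) hηn.le hK.le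

/-- Energy dissipation law for the thermodynamically consistent incompressible immiscible
two-phase porous-media flow model on the rectangle `Ω = [a₁,b₁] × [a₂,b₂]`, with zero
injection/production rates and no-flow boundary conditions: the total free energy `E` is
differentiable in `t ∈ (0,T)` with
`E'(t) = -∑_α ∫_Ω λ_α(S_α) K |∇(p + μ_α)|² ≤ 0`. -/
theorem stmt15
    (a₁ b₁ a₂ b₂ T K ηw ηn σw σn σwn m : ℝ)
    (hab₁ : a₁ < b₁) (hab₂ : a₂ < b₂) (hT : 0 < T)
    (hK : 0 < K) (hηw : 0 < ηw) (hηn : 0 < ηn)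
    (hσw : 0 < σw) (hσn : 0 < σn) (hσwn : 0 < σwn) (hm : 0 < m)
    (Ω : Set (ℝ × ℝ)) (hΩ : Ω = Set.Icc a₁ b₁ ×ˢ Set.Icc a₂ b₂)
    -- porosity
    (φ : ℝ × ℝ → ℝ) (hφc : ContinuousOn φ Ω) (hφ : ∀ x ∈ Ω, 0 < φ x ∧ φ x < 1)
    -- regularity of `S_w` and `p` on an open neighborhood `U` of `[0,T] × Ω`:
    -- continuously differentiable in time (jointly C¹) and C² in space
    (U : Set (ℝ × (ℝ × ℝ))) (hUopen : IsOpen U) (hUsub : Set.Icc 0 T ×ˢ Ω ⊆ U)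
    (Sw p : ℝ → ℝ × ℝ → ℝ)
    (hSwC1 : ContDiffOn ℝ 1 (fun q : ℝ × (ℝ × ℝ) => Sw q.1 q.2) U)
    (hpC1 : ContDiffOn ℝ 1 (fun q : ℝ × (ℝ × ℝ) => p q.1 q.2) U)
    (hSwC2 : ∀ t : ℝ, ContDiffOn ℝ 2 (Sw t) {x : ℝ × ℝ | (t, x) ∈ U})
    (hpC2 : ∀ t : ℝ, ContDiffOn ℝ 2 (p t) {x : ℝ × ℝ | (t, x) ∈ U})
    -- bounds on the wetting-phase saturation
    (hSwbnd : ∀ t ∈ Set.Icc (0 : ℝ) T, ∀ x ∈ Ω, 0 < Sw t x ∧ Sw t x < 1)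
    -- non-wetting saturation, chemical potentials and Darcy velocities
    (Sn μw μn : ℝ → ℝ × ℝ → ℝ) (uw un : ℝ → ℝ × ℝ → ℝ × ℝ)
    (hSn : ∀ t x, Sn t x = 1 - Sw t x)
    (hμw : ∀ t x, μw t x = σw * Real.log (Sw t x) + σwn * (1 - Sw t x))
    (hμn : ∀ t x, μn t x = σn * Real.log (Sn t x) + σwn * (1 - Sn t x))
    (huw : ∀ t x, uw t x = (-((Sw t x) ^ m / ηw * K)) • grad2 (fun y => p t y + μw t y) x)
    (hun : ∀ t x, un t x = (-((Sn t x) ^ m / ηn * K)) • grad2 (fun y => p t y + μn t y) x)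
    -- mass conservation equations `φ ∂ₜ S_α + ∇·u_α = 0` on `[0,T] × Ω`
    (hpdew : ∀ t ∈ Set.Icc (0 : ℝ) T, ∀ x ∈ Ω,
      φ x * deriv (fun τ => Sw τ x) t + div2 (uw t) x = 0)
    (hpden : ∀ t ∈ Set.Icc (0 : ℝ) T, ∀ x ∈ Ω,
      φ x * deriv (fun τ => Sn τ x) t + div2 (un t) x = 0)
    -- no-flow boundary conditions `u_α · n = 0` on `[0,T] × ∂Ω`
    (hbcx : ∀ t ∈ Set.Icc (0 : ℝ) T, ∀ y ∈ Set.Icc a₂ b₂,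
      (uw t (a₁, y)).1 = 0 ∧ (uw t (b₁, y)).1 = 0 ∧
      (un t (a₁, y)).1 = 0 ∧ (un t (b₁, y)).1 = 0)
    (hbcy : ∀ t ∈ Set.Icc (0 : ℝ) T, ∀ x ∈ Set.Icc a₁ b₁,
      (uw t (x, a₂)).2 = 0 ∧ (uw t (x, b₂)).2 = 0 ∧
      (un t (x, a₂)).2 = 0 ∧ (un t (x, b₂)).2 = 0) :
    -- conclusion: energy dissipation law
    ∀ t ∈ Set.Ioo (0 : ℝ) T,
      let D : ℝ :=
        (∫ x in Ω, (Sw t x) ^ m / ηw * K *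
          ((grad2 (fun y => p t y + μw t y) x).1 ^ 2 +
           (grad2 (fun y => p t y + μw t y) x).2 ^ 2)) +
        (∫ x in Ω, (Sn t x) ^ m / ηn * K *
          ((grad2 (fun y => p t y + μn t y) x).1 ^ 2 +
           (grad2 (fun y => p t y + μn t y) x).2 ^ 2))
      HasDerivAt (fun τ => ∫ x in Ω, φ x *
          (σw * Sw τ x * (Real.log (Sw τ x) - 1) +
           σn * Sn τ x * (Real.log (Sn τ x) - 1) +
           σwn * Sw τ x * Sn τ x)) (-D) t ∧ -D ≤ 0 :=
  stmt15_general a₁ b₁ a₂ b₂ T K ηw ηn σw σn σwn m hab₁ hab₂ hK hηw hηn Ω hΩ φ hφc U hUopen hUsub Sw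
    p hSwC1 hSwC2 hpC2 hSwbnd Sn μw μn uw un hSn hμw hμn huw hun hpdew hpden hbcx hbcy
end
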